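/- Let D ⊆ ℝ be an open interval, let b : D → (0,∞) be twice continuously differentiable, let a : D → ℝ be continuously differentiable, set A(y) = ½b(y)², and let ψ : D → ℝ be twice continuously differentiable with ψ'(y) = A'(y)/A(y) − a(y)/A(y) for all y ∈ D. Define (L*f)(y) = A(y)f''(y) + A'(y)f'(y) − ψ'(y)A(y)f'(y), Γ₁(h) = A·(h')², and Γ₂(h) = ½(L*(Γ₁(h)) − 2·A·h'·(L*h)'). Assume there is ρ > 0 such that ½b(y)b''(y) − a'(y) + a(y)b'(y)/b(y) ≥ ρ for all y ∈ D. Then for every four times continuously differentiable h : D → ℝ and every y ∈ D, Γ₂(h)(y) ≥ ρ·Γ₁(h)(y); that is, L* satisfies the Bakry–Émery curvature-dimension condition CD(ρ, ∞). -/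

import Mathlib

/-!
Because `ψ' A = A' - a`, the generator is `L* f = A f'' + a f'`. Expanding `Γ₂` and completing
the square gives the one-dimensional Bochner formula
`Γ₂(h) = (A h'' + ½ A' h')² + (½ A A'' - ¼ A'² + ½ a A' - A a') h'²`,
and for `A = ½ b²` the coefficient of `h'²` is `A (½ b b'' - a' + a b' / b) ≥ ρ A`.
-/

open Filter Topology

noncomputable section

def diffusionGenerator (A a u : ℝ → ℝ) (y : ℝ) : ℝ :=
  A y * deriv (deriv u) y + a y * deriv u y

def carreDuChamp (A u : ℝ → ℝ) (y : ℝ) : ℝ :=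
  A y * deriv u y ^ 2

def iteratedCarreDuChamp (A a u : ℝ → ℝ) (y : ℝ) : ℝ :=
  (1/2) * (diffusionGenerator A a (carreDuChamp A u) y
    - 2 * A y * deriv u y * deriv (diffusionGenerator A a u) y)

end

section

variable {A a u : ℝ → ℝ} {y : ℝ}

lemma hasDerivAt_carreDuChamp (hA : DifferentiableAt ℝ A y)
    (hu : DifferentiableAt ℝ (deriv u) y) :
    HasDerivAt (carreDuChamp A u)
      (deriv A y * deriv u y ^ 2 + 2 * A y * deriv u y * deriv (deriv u) y) y := by
  refine (hA.hasDerivAt.mul (hu.hasDerivAt.pow 2)).congr_deriv ?_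
  simp only [Pi.pow_apply]
  ring

lemma deriv_deriv_carreDuChamp (hA : ∀ᶠ z in 𝓝 y, DifferentiableAt ℝ A z)
    (hu : ∀ᶠ z in 𝓝 y, DifferentiableAt ℝ (deriv u) z)
    (hA' : DifferentiableAt ℝ (deriv A) y) (hu' : DifferentiableAt ℝ (deriv (deriv u)) y) :
    deriv (deriv (carreDuChamp A u)) y
      = deriv (deriv A) y * deriv u y ^ 2 + 4 * deriv A y * deriv u y * deriv (deriv u) y
        + 2 * A y * (deriv (deriv u) y ^ 2 + deriv u y * deriv (deriv (deriv u)) y) := by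
  have hderiv : deriv (carreDuChamp A u) =ᶠ[𝓝 y]
      fun z => deriv A z * deriv u z ^ 2 + 2 * A z * deriv u z * deriv (deriv u) z :=
    (hA.and hu).mono fun z hz => (hasDerivAt_carreDuChamp hz.1 hz.2).deriv
  rw [hderiv.deriv_eq]
  have hA₀ := hA.self_of_nhds
  have hu₀ := hu.self_of_nhds
  refine HasDerivAt.deriv ?_
  refine ((hA'.hasDerivAt.mul (hu₀.hasDerivAt.pow 2)).add
    (((hA₀.hasDerivAt.const_mul 2).mul hu₀.hasDerivAt).mul hu'.hasDerivAt)).congr_deriv ?_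
  simp only [Pi.mul_apply, Pi.pow_apply]
  ring

lemma hasDerivAt_diffusionGenerator (hA : DifferentiableAt ℝ A y) (ha : DifferentiableAt ℝ a y)
    (hu : DifferentiableAt ℝ (deriv u) y) (hu' : DifferentiableAt ℝ (deriv (deriv u)) y) :
    HasDerivAt (diffusionGenerator A a u)
      (deriv A y * deriv (deriv u) y + A y * deriv (deriv (deriv u)) y
        + deriv a y * deriv u y + a y * deriv (deriv u) y) y := by
  refine ((hA.hasDerivAt.mul hu'.hasDerivAt).add (ha.hasDerivAt.mul hu.hasDerivAt)).congr_deriv ?_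
  ring

lemma iteratedCarreDuChamp_eq (hA : ∀ᶠ z in 𝓝 y, DifferentiableAt ℝ A z)
    (hu : ∀ᶠ z in 𝓝 y, DifferentiableAt ℝ (deriv u) z)
    (hA' : DifferentiableAt ℝ (deriv A) y) (hu' : DifferentiableAt ℝ (deriv (deriv u)) y)
    (ha : DifferentiableAt ℝ a y) :
    iteratedCarreDuChamp A a u y
      = (A y * deriv (deriv u) y + (1/2) * deriv A y * deriv u y) ^ 2
        + ((1/2) * A y * deriv (deriv A) y - (1/4) * deriv A y ^ 2
          + (1/2) * a y * deriv A y - A y * deriv a y) * deriv u y ^ 2 := by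
  rw [iteratedCarreDuChamp, diffusionGenerator, deriv_deriv_carreDuChamp hA hu hA' hu',
    (hasDerivAt_carreDuChamp hA.self_of_nhds hu.self_of_nhds).deriv,
    (hasDerivAt_diffusionGenerator hA.self_of_nhds ha hu.self_of_nhds hu').deriv]
  ring

end

section

variable {b : ℝ → ℝ} {y : ℝ}

lemma hasDerivAt_half_sq (hb : DifferentiableAt ℝ b y) :
    HasDerivAt (fun z => (1/2) * b z ^ 2) (b y * deriv b y) y := by
  refine ((hb.hasDerivAt.pow 2).const_mul (1/2 : ℝ)).congr_deriv ?_
  ring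

lemma hasDerivAt_deriv_half_sq (hb : ∀ᶠ z in 𝓝 y, DifferentiableAt ℝ b z)
    (hb' : DifferentiableAt ℝ (deriv b) y) :
    HasDerivAt (deriv fun z => (1/2) * b z ^ 2) (deriv b y ^ 2 + b y * deriv (deriv b) y) y := by
  have hderiv : (deriv fun z => (1/2) * b z ^ 2) =ᶠ[𝓝 y] fun z => b z * deriv b z :=
    hb.mono fun z hz => (hasDerivAt_half_sq hz).deriv
  refine HasDerivAt.congr_of_eventuallyEq ?_ hderiv
  refine (hb.self_of_nhds.hasDerivAt.mul hb'.hasDerivAt).congr_deriv ?_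
  ring

lemma mul_carreDuChamp_le_iteratedCarreDuChamp_half_sq {a u : ℝ → ℝ} {ρ : ℝ}
    (hb : ∀ᶠ z in 𝓝 y, DifferentiableAt ℝ b z) (hb' : DifferentiableAt ℝ (deriv b) y)
    (hb₀ : b y ≠ 0) (ha : DifferentiableAt ℝ a y)
    (hu : ∀ᶠ z in 𝓝 y, DifferentiableAt ℝ (deriv u) z)
    (hu' : DifferentiableAt ℝ (deriv (deriv u)) y)
    (hcurv : ρ ≤ (1/2) * b y * deriv (deriv b) y - deriv a y + a y * deriv b y / b y) :
    ρ * carreDuChamp (fun z => (1/2) * b z ^ 2) u y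
      ≤ iteratedCarreDuChamp (fun z => (1/2) * b z ^ 2) a u y := by
  have hA'' := hasDerivAt_deriv_half_sq hb hb'
  rw [iteratedCarreDuChamp_eq (hb.mono fun z hz => (hasDerivAt_half_sq hz).differentiableAt) hu
    hA''.differentiableAt hu' ha, hA''.deriv, (hasDerivAt_half_sq hb.self_of_nhds).deriv,
    carreDuChamp]
  have hcoeff : (1/2) * ((1/2) * b y ^ 2) * (deriv b y ^ 2 + b y * deriv (deriv b) y)
        - (1/4) * (b y * deriv b y) ^ 2 + (1/2) * a y * (b y * deriv b y)
        - (1/2) * b y ^ 2 * deriv a y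
      = (1/2) * b y ^ 2
        * ((1/2) * b y * deriv (deriv b) y - deriv a y + a y * deriv b y / b y) := by
    field_simp
    ring
  rw [hcoeff]
  nlinarith [mul_le_mul_of_nonneg_right hcurv (by positivity : 0 ≤ (1/2) * b y ^ 2 * deriv u y ^ 2),
    sq_nonneg ((1/2) * b y ^ 2 * deriv (deriv u) y + (1/2) * (b y * deriv b y) * deriv u y)]

end

theorem stmt5_general (D : Set ℝ) (hD_open : IsOpen D)
    (a b A ψ : ℝ → ℝ) (ρ : ℝ)
    (hb_pos : ∀ y ∈ D, 0 < b y)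
    (hb : ContDiffOn ℝ 2 b D) (ha : ContDiffOn ℝ 1 a D)
    (hA : ∀ y : ℝ, A y = (1/2) * (b y)^2)
    (hψ' : ∀ y ∈ D, deriv ψ y = deriv A y / A y - a y / A y)
    (Lstar : (ℝ → ℝ) → ℝ → ℝ)
    (hL : ∀ u : ℝ → ℝ, ∀ y : ℝ, Lstar u y
      = A y * deriv (deriv u) y + deriv A y * deriv u y - deriv ψ y * A y * deriv u y)
    (Γ₁ Γ₂ : (ℝ → ℝ) → ℝ → ℝ)
    (hΓ₁ : ∀ u : ℝ → ℝ, ∀ y : ℝ, Γ₁ u y = A y * (deriv u y)^2)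
    (hΓ₂ : ∀ u : ℝ → ℝ, ∀ y : ℝ, Γ₂ u y
      = (1/2) * (Lstar (Γ₁ u) y - 2 * A y * deriv u y * deriv (Lstar u) y))
    (hcurv : ∀ y ∈ D, (1/2) * b y * deriv (deriv b) y - deriv a y + a y * deriv b y / b y ≥ ρ) :
    ∀ h : ℝ → ℝ, ContDiffOn ℝ 4 h D → ∀ y ∈ D, Γ₂ h y ≥ ρ * Γ₁ h y := by
  intro h hh y hy
  have hD : D ∈ 𝓝 y := hD_open.mem_nhds hy
  have hΓ₁_eq : Γ₁ = carreDuChamp A := funext fun u => funext (hΓ₁ u)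
  have hL_eq (u : ℝ → ℝ) : Lstar u =ᶠ[𝓝 y] diffusionGenerator A a u :=
    eventually_of_mem hD fun z hz => by
      have : A z ≠ 0 := by rw [hA]; have := hb_pos z hz; positivity
      rw [hL, hψ' z hz, diffusionGenerator]
      field_simp
      ring
  have hΓ₂_eq : Γ₂ h y = iteratedCarreDuChamp A a h y := by
    rw [hΓ₂, hΓ₁_eq, iteratedCarreDuChamp, (hL_eq _).eq_of_nhds, (hL_eq h).deriv_eq]
  obtain rfl : A = fun z => (1/2) * b z ^ 2 := funext hA
  have hb' := hb.deriv_of_isOpen hD_open (m := 1) le_rfl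
  have hh' := hh.deriv_of_isOpen hD_open (m := 3) (by norm_num)
  have hh'' := hh'.deriv_of_isOpen hD_open (m := 2) le_rfl
  rw [hΓ₂_eq, hΓ₁_eq, ge_iff_le]
  exact mul_carreDuChamp_le_iteratedCarreDuChamp_half_sq
    ((hb.differentiableOn two_ne_zero).eventually_differentiableAt hD)
    ((hb'.differentiableOn one_ne_zero).differentiableAt hD) (hb_pos y hy).ne'
    ((ha.differentiableOn one_ne_zero).differentiableAt hD)
    ((hh'.differentiableOn three_ne_zero).eventually_differentiableAt hD)
    ((hh''.differentiableOn two_ne_zero).differentiableAt hD) (hcurv y hy)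

/-- **Bakry–Émery curvature-dimension condition `CD(ρ,∞)`.** With `A = ½b²`,
`ψ' = A'/A − a/A`, `(L*f) = Af'' + A'f' − ψ'Af'`, `Γ₁(h) = A(h')²` and
`Γ₂(h) = ½(L*(Γ₁(h)) − 2Ah'(L*h)')`, if `½bb'' − a' + ab'/b ≥ ρ > 0` on `D`, then
`Γ₂(h) ≥ ρ Γ₁(h)` on `D` for every `C⁴` function `h`. -/
theorem stmt5 (D : Set ℝ) (hD_open : IsOpen D) (hD_conn : D.OrdConnected)
    (a b A ψ : ℝ → ℝ) (ρ : ℝ) (hρ : 0 < ρ)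
    (hb_pos : ∀ y ∈ D, 0 < b y)
    (hb : ContDiffOn ℝ 2 b D) (ha : ContDiffOn ℝ 1 a D)
    (hA : ∀ y : ℝ, A y = (1/2) * (b y)^2)
    (hψ : ContDiffOn ℝ 2 ψ D)
    (hψ' : ∀ y ∈ D, deriv ψ y = deriv A y / A y - a y / A y)
    (Lstar : (ℝ → ℝ) → ℝ → ℝ)
    (hL : ∀ u : ℝ → ℝ, ∀ y : ℝ, Lstar u y
      = A y * deriv (deriv u) y + deriv A y * deriv u y - deriv ψ y * A y * deriv u y)
    (Γ₁ Γ₂ : (ℝ → ℝ) → ℝ → ℝ)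
    (hΓ₁ : ∀ u : ℝ → ℝ, ∀ y : ℝ, Γ₁ u y = A y * (deriv u y)^2)
    (hΓ₂ : ∀ u : ℝ → ℝ, ∀ y : ℝ, Γ₂ u y
      = (1/2) * (Lstar (Γ₁ u) y - 2 * A y * deriv u y * deriv (Lstar u) y))
    (hcurv : ∀ y ∈ D, (1/2) * b y * deriv (deriv b) y - deriv a y + a y * deriv b y / b y ≥ ρ) :
    ∀ h : ℝ → ℝ, ContDiffOn ℝ 4 h D → ∀ y ∈ D, Γ₂ h y ≥ ρ * Γ₁ h y :=
  stmt5_general D hD_open a b A ψ ρ hb_pos hb ha hA hψ' Lstar hL Γ₁ Γ₂ hΓ₁ hΓ₂ hcurv
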